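/- arXiv:1504.05932 — 2 statements merged into one kernel-verified Lean document; each statement's English description precedes it below -/
import Mathlib

section
/- Any strategy-proof, non-bossy, and category-wise neutral allocation mechanism over a basic categorized domain with p ≥ 2 categories is Pareto optimal: for every profile P there is no allocation A such that every agent weakly prefers A(j) to f^j(P) and some agent strictly prefers A(j) to f^j(P). -/
/-- A bundle in a basic categorized domain: one item (from `Fin n`) per category (`Fin p`). -/
abbrev Bundle (n p : ℕ) := Fin p → Fin n

/-- A preference: a binary relation on bundles (`R a b` means `a` is strictly preferred to `b`). -/
abbrev Pref (n p : ℕ) := Bundle n p → Bundle n p → Prop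

/-- A profile assigns a preference to each of the `n` agents. -/
abbrev Profile (n p : ℕ) := Fin n → Pref n p

/-- An allocation mechanism: maps a profile to the bundle of each agent. -/
abbrev Mechanism (n p : ℕ) := Profile n p → Fin n → Bundle n p

/-- All preferences in the profile are strict linear orders. -/
def ValidProfile {n p : ℕ} (P : Profile n p) : Prop :=
  ∀ j, IsStrictTotalOrder (Bundle n p) (P j)

/-- A valid allocation: in every category, no item is given to two agents. -/
def ValidAlloc {n p : ℕ} (A : Fin n → Bundle n p) : Prop :=
  ∀ i : Fin p, Function.Injective fun j => A j i

/-- Strategy-proofness: no agent can get a strictly better bundle by misreporting. -/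
def StrategyProof {n p : ℕ} (f : Mechanism n p) : Prop :=
  ∀ P : Profile n p, ValidProfile P → ∀ j : Fin n, ∀ R' : Pref n p,
    IsStrictTotalOrder (Bundle n p) R' →
    f P j = f (Function.update P j R') j ∨ P j (f P j) (f (Function.update P j R') j)

/-- Non-bossiness: an agent cannot change others' bundles without changing her own. -/
def NonBossy {n p : ℕ} (f : Mechanism n p) : Prop :=
  ∀ P : Profile n p, ValidProfile P → ∀ j : Fin n, ∀ R' : Pref n p,
    IsStrictTotalOrder (Bundle n p) R' →
    f P j = f (Function.update P j R') j → f P = f (Function.update P j R')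

/-- Relabel a bundle by permuting the items of category `i` by `M`. -/
def relabel {n p : ℕ} (i : Fin p) (M : Fin n ≃ Fin n) (d : Bundle n p) : Bundle n p :=
  Function.update d i (M (d i))

/-- The preference induced on relabeled bundles. -/
def permPref {n p : ℕ} (i : Fin p) (M : Fin n ≃ Fin n) (R : Pref n p) : Pref n p :=
  fun a b => R (relabel i M.symm a) (relabel i M.symm b)

/-- Category-wise neutrality: permuting the items of one category permutes the allocation. -/
def CatNeutral {n p : ℕ} (f : Mechanism n p) : Prop :=
  ∀ P : Profile n p, ValidProfile P → ∀ (i : Fin p) (M : Fin n ≃ Fin n) (j : Fin n),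
    f (fun j' => permPref i M (P j')) j = relabel i M (f P j)

/-- Pareto optimality of a mechanism. -/
def ParetoOptimal {n p : ℕ} (f : Mechanism n p) : Prop :=
  ∀ P : Profile n p, ValidProfile P →
    ¬ ∃ A : Fin n → Bundle n p, ValidAlloc A ∧
      (∀ j, A j = f P j ∨ P j (A j) (f P j)) ∧ (∃ j, P j (A j) (f P j))

/-- `R'` is a pushup of `d` from `R`: relative order of other bundles unchanged,
and the set of bundles above `d` only shrinks. -/
def Pushup {n p : ℕ} (d : Bundle n p) (R R' : Pref n p) : Prop :=
  (∀ a b, a ≠ d → b ≠ d → (R' a b ↔ R a b)) ∧ (∀ a, R' a d → R a d)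

/-- `A` is the serial-dictatorship allocation for profile `P` and agent order `K`
(`K t` is the agent acting at step `t`): each dictator's bundle avoids earlier dictators'
items and is preferred to every other bundle avoiding earlier dictators' items. -/
def IsSDAlloc {n p : ℕ} (P : Profile n p) (K : Fin n ≃ Fin n) (A : Fin n → Bundle n p) : Prop :=
  ∀ t : Fin n,
    (∀ s : Fin n, s < t → ∀ i, A (K s) i ≠ A (K t) i) ∧
    (∀ b : Bundle n p, (∀ s : Fin n, s < t → ∀ i, A (K s) i ≠ b i) →
      b ≠ A (K t) → P (K t) (A (K t)) b)

/-- `f` is a serial dictatorship. -/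
def SerialDict {n p : ℕ} (f : Mechanism n p) : Prop :=
  ∃ K : Fin n ≃ Fin n, ∀ P : Profile n p, ValidProfile P → IsSDAlloc P K (f P)

/-!
Strategy-proofness and non-bossiness give Maskin monotonicity: if every agent's bundle keeps
everything it beat, the allocation does not change. Suppose `A` Pareto-dominates `f P`. Applying
category-wise neutrality once per category to the permutations sending `f P` to `A` yields a
relabelled profile `Q` with `f Q = A`. A profile `R` in which each agent ranks `A j` first and
`f P j` second is a monotonic transformation of `Q` at `A` and, by domination, of `P` at `f P`.
Hence `A = f R = f P`, contradicting the strict improvement of some agent.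
-/

open Function

theorem isStrictTotalOrder_preimage {α β : Type*} {r : β → β → Prop}
    (hr : IsStrictTotalOrder β r) {g : α → β} (hg : Injective g) :
    IsStrictTotalOrder α (g ⁻¹'o r) :=
  (RelEmbedding.preimage ⟨g, hg⟩ r).isStrictTotalOrder

theorem exists_isStrictTotalOrder_top_two {α : Type*} [Countable α] (a b : α) :
    ∃ r : α → α → Prop, IsStrictTotalOrder α r ∧ (∀ c, c ≠ a → r a c) ∧
      (∀ c, c ≠ a → c ≠ b → r b c) := by
  classical
  obtain ⟨e, he⟩ := Countable.exists_injective_nat α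
  let rank : α → ℕ := fun c => if c = a then 0 else if c = b then 1 else 2
  let key : α → ℕ ×ₗ ℕ := fun c => toLex (rank c, e c)
  have hkey : Injective key := fun c d h => he (Prod.ext_iff.1 (toLex.injective h)).2
  refine ⟨key ⁻¹'o (· < ·), isStrictTotalOrder_preimage inferInstance hkey, ?_, ?_⟩
  · refine fun c hc => Prod.Lex.toLex_lt_toLex.2 (Or.inl ?_)
    simp only [rank, if_neg hc]
    split_ifs <;> norm_num
  · refine fun c hca hcb => Prod.Lex.toLex_lt_toLex.2 (Or.inl ?_)
    simp only [rank, if_neg hca, if_neg hcb]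
    split_ifs <;> norm_num

variable {n p : ℕ}

theorem ValidProfile.update {P : Profile n p} (hP : ValidProfile P) (j : Fin n) {R : Pref n p}
    (hR : IsStrictTotalOrder (Bundle n p) R) : ValidProfile (update P j R) := by
  intro k
  rcases eq_or_ne k j with rfl | hk
  · simpa using hR
  · simpa [update_of_ne hk] using hP k

def MaskinMonotone (f : Mechanism n p) : Prop :=
  ∀ P R : Profile n p, ValidProfile P → ValidProfile R →
    (∀ j b, P j (f P j) b → R j (f P j) b) → f R = f P

namespace StrategyProof

variable {f : Mechanism n p}

theorem update_eq_of_monotone (hSP : StrategyProof f) (hNB : NonBossy f) {P : Profile n p}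
    (hP : ValidProfile P) (j : Fin n) {R : Pref n p} (hR : IsStrictTotalOrder (Bundle n p) R)
    (hmon : ∀ b, P j (f P j) b → R (f P j) b) :
    f (update P j R) = f P := by
  have := hR
  have hback := hSP (update P j R) (hP.update j hR) j (P j) (hP j)
  simp only [update_idem, update_eq_self, update_self] at hback
  have hown : f (update P j R) j = f P j := by
    refine hback.resolve_right fun hlt => ?_
    rcases hSP P hP j R hR with heq | hgt
    · exact irrefl _ (heq ▸ hlt)
    · exact asymm hlt (hmon _ hgt)
  exact (hNB P hP j R hR hown.symm).symm

theorem maskinMonotone (hSP : StrategyProof f) (hNB : NonBossy f) : MaskinMonotone f := by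
  classical
  intro P R hP hR hmon
  suffices h : ∀ S : Finset (Fin n), f (S.piecewise R P) = f P by
    simpa using h Finset.univ
  intro S
  induction S using Finset.induction_on with
  | empty => simp
  | insert k S hk ih =>
    have hS : ValidProfile (S.piecewise R P) := fun j => S.piecewise_cases R P _ (hR j) (hP j)
    have hmonS : ∀ b, S.piecewise R P k (f (S.piecewise R P) k) b →
        R k (f (S.piecewise R P) k) b := by
      rw [ih, Finset.piecewise_eq_of_notMem _ _ _ hk]
      exact hmon k
    rw [Finset.piecewise_insert, hSP.update_eq_of_monotone hNB hS k (hR k) hmonS, ih]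

end StrategyProof

def relabelEquiv (i : Fin p) (M : Fin n ≃ Fin n) : Bundle n p ≃ Bundle n p where
  toFun := relabel i M
  invFun := relabel i M.symm
  left_inv d := by simp [relabel]
  right_inv d := by simp [relabel]

def relabelProfile (σ : Bundle n p ≃ Bundle n p) (P : Profile n p) : Profile n p :=
  fun j a b => P j (σ.symm a) (σ.symm b)

theorem ValidProfile.relabelProfile {P : Profile n p} (hP : ValidProfile P)
    (σ : Bundle n p ≃ Bundle n p) : ValidProfile (relabelProfile σ P) :=
  fun j => isStrictTotalOrder_preimage (hP j) σ.symm.injective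

def IsEquivariant (f : Mechanism n p) (σ : Bundle n p ≃ Bundle n p) : Prop :=
  ∀ P : Profile n p, ValidProfile P → ∀ j, f (relabelProfile σ P) j = σ (f P j)

theorem IsEquivariant.trans {f : Mechanism n p} {σ τ : Bundle n p ≃ Bundle n p}
    (hσ : IsEquivariant f σ) (hτ : IsEquivariant f τ) : IsEquivariant f (σ.trans τ) := by
  intro P hP j
  change f (relabelProfile τ (relabelProfile σ P)) j = τ (σ (f P j))
  rw [hτ _ (hP.relabelProfile σ), hσ P hP]

theorem piCongrRight_update_eq_trans_relabelEquiv (M : Fin p → Fin n ≃ Fin n) {k : Fin p}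
    (hk : M k = Equiv.refl _) (e : Fin n ≃ Fin n) :
    Equiv.piCongrRight (update M k e) = (Equiv.piCongrRight M).trans (relabelEquiv k e) := by
  ext d i
  rcases eq_or_ne i k with rfl | hi
  · simp [relabelEquiv, relabel, hk]
  · simp [relabelEquiv, relabel, hi]

theorem CatNeutral.isEquivariant_piCongrRight {f : Mechanism n p} (hCN : CatNeutral f)
    (M : Fin p → Fin n ≃ Fin n) : IsEquivariant f (Equiv.piCongrRight M) := by
  classical
  suffices h : ∀ (S : Finset (Fin p)) (M : Fin p → Fin n ≃ Fin n),
      (∀ i ∉ S, M i = Equiv.refl _) → IsEquivariant f (Equiv.piCongrRight M) from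
    h Finset.univ M (by simp)
  intro S
  induction S using Finset.induction_on with
  | empty =>
    intro M hM P _ j
    have : M = fun _ => Equiv.refl _ := funext fun i => hM i (Finset.notMem_empty i)
    subst this
    rfl
  | insert k S _ ih =>
    intro M hM
    have hM' : ∀ i ∉ S, update M k (Equiv.refl _) i = Equiv.refl _ := by
      intro i hi
      rcases eq_or_ne i k with rfl | hik
      · exact update_self _ _ _
      · simpa [hik] using hM i (by simp [hik, hi])
    have key := piCongrRight_update_eq_trans_relabelEquiv (update M k (Equiv.refl _))
      (update_self _ _ _) (M k)
    rw [update_idem, update_eq_self] at key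
    rw [key]
    exact (ih _ hM').trans (hCN · · k (M k))

theorem exists_piCongrRight_apply_eq {A B : Fin n → Bundle n p} (hA : ValidAlloc A)
    (hB : ValidAlloc B) : ∃ M : Fin p → Fin n ≃ Fin n, ∀ j, Equiv.piCongrRight M (B j) = A j := by
  let items (C : Fin n → Bundle n p) (hC : ValidAlloc C) (i : Fin p) : Fin n ≃ Fin n :=
    Equiv.ofBijective (fun j => C j i) (Finite.injective_iff_bijective.mp (hC i))
  refine ⟨fun i => (items B hB i).symm.trans (items A hA i), fun j => funext fun i => ?_⟩
  change items A hA i ((items B hB i).symm (items B hB i j)) = A j i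
  rw [Equiv.symm_apply_apply]
  rfl

theorem statement3_general (n p : ℕ) (f : Mechanism n p)
    (hfA : ∀ P : Profile n p, ValidProfile P → ValidAlloc (f P))
    (hSP : StrategyProof f) (hNB : NonBossy f) (hCN : CatNeutral f) :
    ParetoOptimal f := by
  rintro P hP ⟨A, hA, hdom, j₀, hj₀⟩
  have hmono := hSP.maskinMonotone hNB
  obtain ⟨M, hM⟩ := exists_piCongrRight_apply_eq hA (hfA P hP)
  have hQ : f (relabelProfile (Equiv.piCongrRight M) P) = A :=
    funext fun j => (hCN.isEquivariant_piCongrRight M P hP j).trans (hM j)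
  choose R hR htop hsecond using fun j => exists_isStrictTotalOrder_top_two (A j) (f P j)
  have hRQ : f R = A := by
    refine hQ ▸ hmono _ R (hP.relabelProfile _) hR fun j b hb => ?_
    have := hP.relabelProfile (Equiv.piCongrRight M) j
    rw [hQ] at hb ⊢
    exact htop j b (ne_of_irrefl' hb)
  have hRP : f R = f P := by
    refine hmono P R hP hR fun j b hb => ?_
    have := hP j
    rcases hdom j with hAj | hAj
    · exact hAj ▸ htop j b (hAj ▸ ne_of_irrefl' hb)
    · exact hsecond j b (ne_of_irrefl' (_root_.trans hAj hb)) (ne_of_irrefl' hb)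
  have := hP j₀
  exact irrefl _ (hRP ▸ hRQ ▸ hj₀)

theorem statement3 (n p : ℕ) (hp : 2 ≤ p) (f : Mechanism n p)
    (hfA : ∀ P : Profile n p, ValidProfile P → ValidAlloc (f P))
    (hSP : StrategyProof f) (hNB : NonBossy f) (hCN : CatNeutral f) :
    ParetoOptimal f :=
  statement3_general n p f hfA hSP hNB hCN
end

section
/- The worst-case egalitarian rank of any serial dictatorship CSAM with all-optimistic agents equals n^p: there exists a profile (e.g., all agents having identical preferences) in which some agent receives her bottom-ranked bundle. -/
open scoped Classical

/-- A categorial sequential allocation mechanism: a linear order over agent–category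
pairs, i.e. a bijection from rounds `Fin (n*p)` to pairs. -/
abbrev Csam (n p : ℕ) := Fin (n * p) ≃ Fin n × Fin p

/-- The rank of bundle `b` in preference `R` (1 = best, `n^p` = worst). -/
noncomputable def rank {n p : ℕ} (R : Pref n p) (b : Bundle n p) : ℕ :=
  1 + (Finset.univ.filter fun c => R c b).card

/-- `kval O j i`: the number of category-`i` items still available when agent `j`
picks from category `i` (depends only on `O`). -/
def kval {n p : ℕ} (O : Csam n p) (j : Fin n) (i : Fin p) : ℕ :=
  1 + (Finset.univ.filter fun j' : Fin n => O.symm (j, i) < O.symm (j', i)).card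

/-- `Oj O j l`: the `l`-th category (0-based) that agent `j` visits in `O`. -/
noncomputable def Oj {n p : ℕ} (O : Csam n p) (j : Fin n) (l : Fin p) : Fin p :=
  (O ((Finset.univ.image fun i : Fin p => O.symm (j, i)).orderIsoOfFin
      (by
        rw [Finset.card_image_of_injective _
          (fun a b h => congrArg Prod.snd (O.symm.injective h))]
        simp) l).1).2

/-- `NoInterruptF O j K`: for every later position `l > K` of agent `j`, no other agent
picks from category `Oj O j l` between agent `j`'s pick in category `Oj O j K`
and her pick in category `Oj O j l`. -/
def NoInterruptF {n p : ℕ} (O : Csam n p) (j : Fin n) (K : ℕ) : Prop :=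
  ∀ lK : Fin p, (lK : ℕ) = K → ∀ l : Fin p, lK < l → ∀ j' : Fin n, j' ≠ j →
    ¬ (O.symm (j, Oj O j lK) < O.symm (j', Oj O j l) ∧
       O.symm (j', Oj O j l) < O.symm (j, Oj O j l))

/-- `Kval O j`: the smallest (0-based) index `K` such that agent `j` is not interrupted
from position `K` onwards. -/
noncomputable def Kval {n p : ℕ} (O : Csam n p) (j : Fin n) : ℕ :=
  sInf {K : ℕ | K < p ∧ NoInterruptF O j K}

/-- Item `d` of category `i` is still available at round `t` under final allocation `A`. -/
def availAt {n p : ℕ} (O : Csam n p) (A : Fin n → Bundle n p) (t : Fin (n * p))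
    (i : Fin p) (d : Fin n) : Prop :=
  ∀ j' : Fin n, O.symm (j', i) < t → A j' i ≠ d

/-- Bundle `b` is still achievable by agent `j` at round `t`: it agrees with her previous
choices and all remaining components are still available. -/
def achievable {n p : ℕ} (O : Csam n p) (A : Fin n → Bundle n p) (j : Fin n)
    (t : Fin (n * p)) (b : Bundle n p) : Prop :=
  (∀ c : Fin p, O.symm (j, c) < t → b c = A j c) ∧
  (∀ c : Fin p, ¬ O.symm (j, c) < t → availAt O A t c (b c))

/-- Agent `j` plays optimistically in the run producing allocation `A`: at each of her
rounds she picks the item of her top-ranked still-achievable bundle. -/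
def OptPlays {n p : ℕ} (O : Csam n p) (P : Profile n p) (A : Fin n → Bundle n p)
    (j : Fin n) : Prop :=
  ∀ i : Fin p, ∃ b : Bundle n p, achievable O A j (O.symm (j, i)) b ∧
    (∀ b' : Bundle n p, achievable O A j (O.symm (j, i)) b' → b' ≠ b → P j b b') ∧
    A j i = b i

/-- Agent `j` plays pessimistically in the run producing `A`: at each of her rounds, for
every available alternative item `d'`, some achievable bundle with component `d'` is worse
than every achievable bundle with the component she actually chose. -/
def PesPlays {n p : ℕ} (O : Csam n p) (P : Profile n p) (A : Fin n → Bundle n p)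
    (j : Fin n) : Prop :=
  ∀ i : Fin p, ∀ d' : Fin n, availAt O A (O.symm (j, i)) i d' → d' ≠ A j i →
    ∃ w' : Bundle n p, achievable O A j (O.symm (j, i)) w' ∧ w' i = d' ∧
      ∀ w : Bundle n p, achievable O A j (O.symm (j, i)) w → w i = A j i → P j w w'

/-- `∏_{l = K_j}^{p} k_{j, O_j(l)}`. -/
noncomputable def optProd {n p : ℕ} (O : Csam n p) (j : Fin n) : ℕ :=
  ∏ l ∈ Finset.univ.filter (fun l : Fin p => Kval O j ≤ (l : ℕ)), kval O j (Oj O j l)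

/-- `∑_{l = 1}^{p} (k_{j, O_j(l)} - 1)`. -/
noncomputable def pesSum {n p : ℕ} (O : Csam n p) (j : Fin n) : ℕ :=
  ∑ l : Fin p, (kval O j (Oj O j l) - 1)

/-- `O` is a serial dictatorship order: there is an order `σ` of the agents such that
all picks of an earlier agent precede all picks of a later agent. -/
def IsSerialDict {n p : ℕ} (O : Csam n p) : Prop :=
  ∃ σ : Fin n ≃ Fin n, ∀ j j' : Fin n, ∀ i i' : Fin p, j ≠ j' →
    (O.symm (j, i) < O.symm (j', i') ↔ σ j < σ j')

/-! The rank bound is just the count of bundles. For the extremal profile let every agent rank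
bundles lexicographically: in a serial dictatorship in which the `k`-th dictator takes item `k`
in every category, each dictator's constant bundle is her best achievable one, since all smaller
items are already gone, so the last dictator is left with the constant bundle of the largest
items, the lexicographic maximum. -/

lemma card_bundle (n p : ℕ) : Fintype.card (Bundle n p) = n ^ p := by
  simp [Bundle]

lemma rank_le_pow {n p : ℕ} {R : Pref n p} (hR : ∀ b, ¬ R b b) (b : Bundle n p) :
    rank R b ≤ n ^ p := by
  have hsub : (Finset.univ.filter fun c => R c b) ⊆ Finset.univ.erase b := fun c hc =>
    Finset.mem_erase.2 ⟨fun hcb => hR b (hcb ▸ (Finset.mem_filter.1 hc).2), Finset.mem_univ c⟩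
  have hcard := Finset.card_le_card hsub
  rw [Finset.card_erase_of_mem (Finset.mem_univ b), Finset.card_univ, card_bundle] at hcard
  have hpos : 0 < n ^ p := card_bundle n p ▸ Fintype.card_pos_iff.2 ⟨b⟩
  unfold rank
  omega

lemma rank_eq_pow_of_forall_lt {n p : ℕ} {R : Pref n p} (hR : ∀ b, ¬ R b b) {b : Bundle n p}
    (hb : ∀ c, c ≠ b → R c b) : rank R b = n ^ p := by
  have hfilter : (Finset.univ.filter fun c => R c b) = Finset.univ.erase b := by
    ext c
    simp only [Finset.mem_filter, Finset.mem_erase, Finset.mem_univ, true_and, and_true]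
    exact ⟨fun hcb hc => hR b (hc ▸ hcb), hb c⟩
  have hpos : 0 < n ^ p := card_bundle n p ▸ Fintype.card_pos_iff.2 ⟨b⟩
  rw [rank, hfilter, Finset.card_erase_of_mem (Finset.mem_univ b), Finset.card_univ, card_bundle]
  omega

lemma achievable_self {n p : ℕ} {O : Csam n p} {A : Fin n → Bundle n p} (hA : ValidAlloc A)
    (j : Fin n) (t : Fin (n * p)) : achievable O A j t (A j) := by
  refine ⟨fun _ _ => rfl, fun c hc j' hj' hAj' => ?_⟩
  have hj : j' = j := hA c hAj'
  exact hc (hj ▸ hj')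

def lexPref {n p : ℕ} : Pref n p := fun b c => toLex b < toLex c

lemma lexPref_isStrictTotalOrder {n p : ℕ} : IsStrictTotalOrder (Bundle n p) lexPref :=
  Function.Injective.isStrictTotalOrder_onFun LT.lt toLex.injective

lemma lexPref_irrefl {n p : ℕ} (b : Bundle n p) : ¬ lexPref b b :=
  lt_irrefl (toLex b)

lemma lexPref_of_le_of_ne {n p : ℕ} {b c : Bundle n p} (hle : b ≤ c) (hne : b ≠ c) :
    lexPref b c :=
  Pi.toLex_strictMono (lt_of_le_of_ne hle hne)

def IsSerialDictWith {n p : ℕ} (O : Csam n p) (σ : Fin n ≃ Fin n) : Prop :=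
  ∀ j j' : Fin n, ∀ i i' : Fin p, j ≠ j' → (O.symm (j, i) < O.symm (j', i') ↔ σ j < σ j')

def serialAlloc {n p : ℕ} (σ : Fin n ≃ Fin n) : Fin n → Bundle n p := fun j _ => σ j

lemma validAlloc_serialAlloc {n p : ℕ} (σ : Fin n ≃ Fin n) :
    ValidAlloc (serialAlloc (p := p) σ) :=
  fun _ _ _ h => σ.injective h

section SerialDict

variable {n p : ℕ} {O : Csam n p} {σ : Fin n ≃ Fin n}

lemma le_of_availAt_serialAlloc (hσ : IsSerialDictWith O σ) {j : Fin n} {i c : Fin p}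
    {d : Fin n} (hd : availAt O (serialAlloc σ) (O.symm (j, i)) c d) : σ j ≤ d := by
  by_contra! hlt
  have hne : σ.symm d ≠ j := fun h => hlt.ne (by rw [← h, σ.apply_symm_apply])
  have hbefore : O.symm (σ.symm d, c) < O.symm (j, i) :=
    (hσ _ j c i hne).2 (by rwa [σ.apply_symm_apply])
  exact hd _ hbefore (σ.apply_symm_apply d)

lemma le_of_achievable_serialAlloc (hσ : IsSerialDictWith O σ) {j : Fin n} {i : Fin p}
    {b : Bundle n p} (hb : achievable O (serialAlloc σ) j (O.symm (j, i)) b) (c : Fin p) :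
    σ j ≤ b c := by
  by_cases hc : O.symm (j, c) < O.symm (j, i)
  · exact (hb.1 c hc).ge
  · exact le_of_availAt_serialAlloc hσ (hb.2 c hc)

lemma optPlays_serialAlloc (hσ : IsSerialDictWith O σ) (j : Fin n) :
    OptPlays O (fun _ => lexPref) (serialAlloc σ) j := fun _ =>
  ⟨serialAlloc σ j, achievable_self (validAlloc_serialAlloc σ) j _,
    fun _ hb hne => lexPref_of_le_of_ne (le_of_achievable_serialAlloc hσ hb) hne.symm, rfl⟩

end SerialDict

theorem statement11_general (n p : ℕ) (hn : 0 < n)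
    (O : Csam n p) (hO : IsSerialDict O) :
    (∀ P : Profile n p, ValidProfile P →
      ∀ A : Fin n → Bundle n p, ValidAlloc A → (∀ j, OptPlays O P A j) →
        ∀ j : Fin n, rank (P j) (A j) ≤ n ^ p) ∧
    (∃ P : Profile n p, ValidProfile P ∧
      ∃ A : Fin n → Bundle n p, ValidAlloc A ∧ (∀ j, OptPlays O P A j) ∧
        ∃ j : Fin n, rank (P j) (A j) = n ^ p) := by
  refine ⟨fun P hP A _ _ j => rank_le_pow (fun b => (hP j).irrefl b) (A j), ?_⟩
  obtain ⟨σ, hσ⟩ := hO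
  let top : Fin n := ⟨n - 1, by omega⟩
  have hlast : serialAlloc σ (σ.symm top) = fun _ : Fin p => top :=
    funext fun _ => σ.apply_symm_apply top
  refine ⟨fun _ => lexPref, fun _ => lexPref_isStrictTotalOrder, serialAlloc σ,
    validAlloc_serialAlloc σ, optPlays_serialAlloc hσ, σ.symm top, ?_⟩
  rw [hlast]
  refine rank_eq_pow_of_forall_lt lexPref_irrefl fun c hc => lexPref_of_le_of_ne ?_ hc
  exact fun _ => Fin.le_def.2 (by simp only [top]; omega)

theorem statement11 (n p : ℕ) (hn : 0 < n) (hp : 0 < p)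
    (O : Csam n p) (hO : IsSerialDict O) :
    (∀ P : Profile n p, ValidProfile P →
      ∀ A : Fin n → Bundle n p, ValidAlloc A → (∀ j, OptPlays O P A j) →
        ∀ j : Fin n, rank (P j) (A j) ≤ n ^ p) ∧
    (∃ P : Profile n p, ValidProfile P ∧
      ∃ A : Fin n → Bundle n p, ValidAlloc A ∧ (∀ j, OptPlays O P A j) ∧
        ∃ j : Fin n, rank (P j) (A j) = n ^ p) :=
  statement11_general n p hn O hO
end
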